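/- The characteristic polynomial of S_{n,n+2} is x^n − (n+2)x^{n−2} − 6x^{n−3} + (3n−15)x^{n−4}. -/

import Mathlib

/-! For `n ≥ 6` the last vertex of `S_{n,n+2}` is a leaf hanging on the centre, so Schwenk's
formula `φ(G) = x φ(G - v) - φ(G - v - u)` for a leaf `v` with neighbour `u` gives
`φ(S_{n,n+2}) = x φ(S_{n-1,n+1}) - φ(K_{1,3} ∪ (n - 6) K_1)`, and the last term is
`x^(n-2) - 3 x^(n-4)`. Induction from the direct computation at `n = 5` gives the formula. -/

open Polynomial MeasureTheory

/-- The adjacency matrix of a simple graph over `ℝ` is Hermitian. -/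
lemma adjHerm {V : Type*} [Fintype V] (G : SimpleGraph V) [DecidableRel G.Adj] :
    (SimpleGraph.adjMatrix ℝ G).IsHermitian := by
  ext i j
  simp [Matrix.conjTranspose_apply, SimpleGraph.adj_comm]

/-- The energy of a graph: sum of absolute values of adjacency eigenvalues. -/
noncomputable def energy {V : Type*} [Fintype V] [DecidableEq V] (G : SimpleGraph V)
    [DecidableRel G.Adj] : ℝ :=
  ∑ i, |(adjHerm G).eigenvalues i|

/-- `SnE n k` is the graph `S_{n, n-1+k}`: the star on `n` vertices with center `0`,
plus `k` extra edges joining the fixed leaf `1` to the leaves `2, …, k+1`. -/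
def SnE (n k : ℕ) : SimpleGraph (Fin n) where
  Adj v w := v ≠ w ∧ (v.val = 0 ∨ w.val = 0 ∨
    (v.val = 1 ∧ 2 ≤ w.val ∧ w.val ≤ k + 1) ∨ (w.val = 1 ∧ 2 ≤ v.val ∧ v.val ≤ k + 1))
  symm := by refine ⟨?_⟩; intro v w h; exact ⟨h.1.symm, by tauto⟩
  loopless := by refine ⟨?_⟩; intro v h; exact h.1 rfl

instance {n k : ℕ} : DecidableRel (SnE n k).Adj := fun v w => by
  unfold SnE; exact inferInstanceAs (Decidable (_ ∧ _))

instance {α β : Type*} (G : SimpleGraph α) (H : SimpleGraph β) [DecidableRel G.Adj]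
    [DecidableRel H.Adj] : DecidableRel (G ⊕g H).Adj := fun u v =>
  match u, v with
  | Sum.inl a, Sum.inl b => decidable_of_iff (G.Adj a b) (by simp [SimpleGraph.sum])
  | Sum.inr a, Sum.inr b => decidable_of_iff (H.Adj a b) (by simp [SimpleGraph.sum])
  | Sum.inl _, Sum.inr _ => .isFalse (by simp [SimpleGraph.sum])
  | Sum.inr _, Sum.inl _ => .isFalse (by simp [SimpleGraph.sum])


open Matrix SimpleGraph

namespace Matrix

variable {R : Type*} [CommRing R]

theorem charmatrix_submatrix {m n : Type*} [Fintype m] [Fintype n] [DecidableEq m]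
    [DecidableEq n] (M : Matrix n n R) {f : m → n} (hf : Function.Injective f) :
    charmatrix (M.submatrix f f) = (charmatrix M).submatrix f f := by
  ext i j : 1
  by_cases h : i = j
  · subst h; simp
  · simp [charmatrix_apply_ne _ _ _ h, charmatrix_apply_ne _ _ _ (hf.ne h)]

theorem det_of_lastRow_offDiag_eq_zero {m : ℕ} (N : Matrix (Fin (m + 1)) (Fin (m + 1)) R)
    (hrow : ∀ j, j ≠ Fin.last m → N (Fin.last m) j = 0) :
    N.det = N (Fin.last m) (Fin.last m) * (N.submatrix Fin.castSucc Fin.castSucc).det := by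
  rw [det_succ_row N (Fin.last m), Fintype.sum_eq_single (Fin.last m)
    fun j hj => by simp [hrow j hj]]
  simp [Fin.succAbove_last, ← two_mul, pow_mul]

theorem det_of_lastRow_lastCol_eq_zero {m : ℕ} (N : Matrix (Fin (m + 2)) (Fin (m + 2)) R)
    (hrow : ∀ j, j ≠ 0 → j ≠ Fin.last _ → N (Fin.last _) j = 0)
    (hcol : ∀ i, i ≠ 0 → i ≠ Fin.last _ → N i (Fin.last _) = 0) :
    N.det = N (Fin.last _) (Fin.last _) * (N.submatrix Fin.castSucc Fin.castSucc).det
      - N (Fin.last _) 0 * N 0 (Fin.last _) *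
        (N.submatrix (Fin.succ ∘ Fin.castSucc) (Fin.succ ∘ Fin.castSucc)).det := by
  have hcomm : (Fin.castSucc ∘ Fin.succ : Fin m → Fin (m + 2)) = Fin.succ ∘ Fin.castSucc :=
    funext fun i => (Fin.succ_castSucc i).symm
  have hminor : (N.submatrix Fin.castSucc Fin.succ).det =
      (-1) ^ m * N 0 (Fin.last _) *
        (N.submatrix (Fin.succ ∘ Fin.castSucc) (Fin.succ ∘ Fin.castSucc)).det := by
    rw [det_succ_column _ (Fin.last m), Fintype.sum_eq_single 0 fun i hi => by
      simp [hcol _ (Fin.castSucc_ne_zero_iff.mpr hi) (Fin.castSucc_ne_last i)]]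
    simp [Fin.succAbove_last, submatrix_submatrix, hcomm]
  rw [det_succ_row N (Fin.last _), Fintype.sum_eq_add 0 (Fin.last _) Fin.last_pos.ne
    fun j hj => by simp [hrow j hj.1 hj.2], Fin.succAbove_last, Fin.succAbove_zero, hminor]
  have hsq : ((-1 : R) ^ m) ^ 2 = 1 := by rw [← pow_mul, pow_mul', neg_one_sq, one_pow]
  simp only [Fin.val_last, Fin.val_zero, add_zero, ← two_mul, pow_mul, neg_one_sq, one_pow]
  linear_combination (-(N (Fin.last _) 0 * N 0 (Fin.last _) *
    (N.submatrix (Fin.succ ∘ Fin.castSucc) (Fin.succ ∘ Fin.castSucc)).det)) * hsq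

end Matrix

namespace SimpleGraph

variable (R : Type*) [CommRing R]

theorem adjMatrix_comap {V W : Type*} (G : SimpleGraph V) [DecidableRel G.Adj] (f : W → V)
    [DecidableRel (G.comap f).Adj] : (G.comap f).adjMatrix R = (G.adjMatrix R).submatrix f f := by
  ext i j
  simp [adjMatrix_apply]

theorem charpoly_adjMatrix_of_isolated_last {m : ℕ} (G : SimpleGraph (Fin (m + 1)))
    [DecidableRel G.Adj] (H : SimpleGraph (Fin m)) [DecidableRel H.Adj]
    (hH : G.comap Fin.castSucc = H) (hiso : ∀ j, ¬ G.Adj (Fin.last m) j) :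
    (G.adjMatrix R).charpoly = X * (H.adjMatrix R).charpoly := by
  subst hH
  rw [charpoly, det_of_lastRow_offDiag_eq_zero _ fun j hj => by
      simp [charmatrix_apply_ne _ _ _ hj.symm, hiso],
    charpoly, adjMatrix_comap, charmatrix_submatrix _ (Fin.castSucc_injective m)]
  simp

/-- Schwenk's formula for a leaf. -/
theorem charpoly_adjMatrix_of_pendant_last {m : ℕ} (G : SimpleGraph (Fin (m + 2)))
    [DecidableRel G.Adj] (H : SimpleGraph (Fin (m + 1))) [DecidableRel H.Adj]
    (K : SimpleGraph (Fin m)) [DecidableRel K.Adj]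
    (hH : G.comap Fin.castSucc = H) (hK : G.comap (Fin.succ ∘ Fin.castSucc) = K)
    (hadj : G.Adj (Fin.last _) 0) (hnbr : ∀ j, G.Adj (Fin.last _) j → j = 0) :
    (G.adjMatrix R).charpoly = X * (H.adjMatrix R).charpoly - (K.adjMatrix R).charpoly := by
  subst hH hK
  rw [charpoly, det_of_lastRow_lastCol_eq_zero _
      (fun j hj0 hjl => by simp [charmatrix_apply_ne _ _ _ (Ne.symm hjl), mt (hnbr j) hj0])
      (fun i hi0 hil => by
        simp [charmatrix_apply_ne _ _ _ hil, mt (fun h : G.Adj i _ => hnbr i h.symm) hi0]),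
    charpoly, charpoly, adjMatrix_comap, adjMatrix_comap,
    charmatrix_submatrix _ (Fin.castSucc_injective _),
    charmatrix_submatrix _ ((Fin.succ_injective _).comp (Fin.castSucc_injective _))]
  simp [hadj, hadj.symm]

end SimpleGraph

def clawAndIsolated (m : ℕ) : SimpleGraph (Fin m) :=
  SimpleGraph.fromRel fun v w => v.val = 0 ∧ 1 ≤ w.val ∧ w.val ≤ 3

instance (m : ℕ) : DecidableRel (clawAndIsolated m).Adj :=
  inferInstanceAs (DecidableRel (SimpleGraph.fromRel _).Adj)

theorem comap_castSucc_clawAndIsolated (m : ℕ) :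
    (clawAndIsolated (m + 1)).comap Fin.castSucc = clawAndIsolated m := by
  ext v w
  simp only [comap_adj, clawAndIsolated, fromRel_adj, Fin.val_castSucc, ne_eq, Fin.castSucc_inj]

theorem comap_castSucc_SnE (n k : ℕ) : (SnE (n + 1) k).comap Fin.castSucc = SnE n k := by
  ext v w
  simp only [comap_adj, SnE, Fin.val_castSucc, ne_eq, Fin.castSucc_inj]

theorem comap_succ_castSucc_SnE_three (m : ℕ) :
    (SnE (m + 2) 3).comap (Fin.succ ∘ Fin.castSucc) = clawAndIsolated m := by
  ext v w
  simp only [comap_adj, SnE, clawAndIsolated, fromRel_adj, Function.comp_apply, Fin.val_succ,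
    Fin.val_castSucc, ne_eq, Fin.succ_inj, Fin.castSucc_inj]
  omega

section

variable (R : Type*) [CommRing R]

theorem charpoly_adjMatrix_clawAndIsolated (k : ℕ) :
    ((clawAndIsolated (k + 4)).adjMatrix R).charpoly = X ^ (k + 4) - 3 * X ^ (k + 2) := by
  induction k with
  | zero =>
    have h : charmatrix ((clawAndIsolated 4).adjMatrix R) =
        !![X, -1, -1, -1; -1, X, 0, 0; -1, 0, X, 0; -1, 0, 0, X] := by
      ext i j
      fin_cases i <;> fin_cases j <;> simp [adjMatrix_apply, clawAndIsolated]
    rw [charpoly, h]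
    simp [det_succ_row_zero, Fin.sum_univ_succ, Fin.succAbove]
    ring
  | succ k ih =>
    rw [charpoly_adjMatrix_of_isolated_last R _ _ (comap_castSucc_clawAndIsolated _)
      fun j => by simp [clawAndIsolated], ih]
    ring

theorem charpoly_adjMatrix_SnE_three (k : ℕ) :
    ((SnE (k + 5) 3).adjMatrix R).charpoly = X ^ (k + 5) - ((k : R[X]) + 7) * X ^ (k + 3)
      - 6 * X ^ (k + 2) + 3 * (k : R[X]) * X ^ (k + 1) := by
  induction k with
  | zero =>
    have h : charmatrix ((SnE 5 3).adjMatrix R) =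
        !![X, -1, -1, -1, -1; -1, X, -1, -1, -1; -1, -1, X, 0, 0; -1, -1, 0, X, 0;
          -1, -1, 0, 0, X] := by
      ext i j
      fin_cases i <;> fin_cases j <;> simp [adjMatrix_apply, SnE]
    rw [charpoly, h]
    simp [det_succ_row_zero, Fin.sum_univ_succ, Fin.succAbove]
    ring
  | succ k ih =>
    have hleaf : ∀ j, (SnE (k + 4 + 2) 3).Adj (Fin.last _) j → j = 0 := fun j hj => by
      have := hj.2
      simp only [Fin.val_last] at this
      rw [Fin.ext_iff, Fin.val_zero]
      omega
    refine (charpoly_adjMatrix_of_pendant_last R _ _ _ (comap_castSucc_SnE _ _)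
      (comap_succ_castSucc_SnE_three _) (by simp [SnE]) hleaf).trans ?_
    rw [ih, charpoly_adjMatrix_clawAndIsolated]
    push_cast
    ring

end

/-- The characteristic polynomial of `S_{n,n+2}` is
`x^n - (n+2)x^{n-2} - 6x^{n-3} + (3n-15)x^{n-4}`. -/
theorem charpoly_S_n_nplus2 (n : ℕ) (hn : 5 ≤ n) :
    (SimpleGraph.adjMatrix ℝ (SnE n 3)).charpoly =
      X ^ n - C ((n : ℝ) + 2) * X ^ (n - 2) - C (6 : ℝ) * X ^ (n - 3)
        + C (3 * (n : ℝ) - 15) * X ^ (n - 4) := by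
  obtain ⟨k, rfl⟩ : ∃ k, n = k + 5 := ⟨n - 5, by omega⟩
  rw [charpoly_adjMatrix_SnE_three, show k + 5 - 2 = k + 3 by omega,
    show k + 5 - 3 = k + 2 by omega, show k + 5 - 4 = k + 1 by omega]
  simp only [Nat.cast_add, map_add, map_sub, map_mul, map_natCast, map_ofNat]
  ring
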